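/- Let P and P' be two orientations of the same underlying path from x to y such that P and P' have the same parity of the number of forward arcs (with respect to the traversal from x to y). Then P' can be obtained from P by pushing a subset of the internal vertices of the path. -/

import Mathlib

set_option maxHeartbeats 1000000

/-- An oriented graph on vertex type `V`: an irreflexive, asymmetric arc relation
(no loops, no pair of opposite arcs). -/
structure OGraph (V : Type) where
  adj : V → V → Prop
  irrefl' : ∀ v, ¬ adj v v
  asymm' : ∀ u v, adj u v → ¬ adj v u

namespace OGraph

variable {V W : Type}

/-- `f` is a homomorphism of oriented graphs from `G` to `H`. -/
def Hom (G : OGraph V) (H : OGraph W) (f : V → W) : Prop :=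
  ∀ u v, G.adj u v → H.adj (f u) (f v)

/-- `G` admits a homomorphism to `H`. -/
def HasHom (G : OGraph V) (H : OGraph W) : Prop := ∃ f, G.Hom H f

/-- Pushing a set `S` of vertices: reverse every arc with exactly one endpoint in `S`. -/
def push (G : OGraph V) (S : Set V) : OGraph V where
  adj u v := (((u ∈ S) ↔ (v ∈ S)) ∧ G.adj u v) ∨ (¬((u ∈ S) ↔ (v ∈ S)) ∧ G.adj v u)
  irrefl' := by
    rintro v (⟨_, h⟩ | ⟨h, _⟩)
    · exact G.irrefl' v h
    · exact h Iff.rfl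
  asymm' := by
    rintro u v (⟨e1, h1⟩ | ⟨e1, h1⟩) (⟨e2, h2⟩ | ⟨e2, h2⟩)
    · exact G.asymm' u v h1 h2
    · exact e2 e1.symm
    · exact e1 e2.symm
    · exact G.asymm' u v h2 h1

/-- Isomorphism of oriented graphs. -/
def Iso (G : OGraph V) (H : OGraph W) : Prop :=
  ∃ e : V ≃ W, ∀ u v, G.adj u v ↔ H.adj (e u) (e v)

/-- `G` and `H` are push-equivalent: some push of `G` is isomorphic to `H`. -/
def PushEquiv (G : OGraph V) (H : OGraph W) : Prop :=
  ∃ S : Set V, (G.push S).Iso H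

/-- `G` admits a pushable homomorphism to `H`. -/
def PushHom (G : OGraph V) (H : OGraph W) : Prop :=
  ∃ S : Set V, (G.push S).HasHom H

/-- `G` is pushably `k`-colorable: it admits a pushable homomorphism to some
oriented graph on `k` vertices. -/
def PushablyColorable (G : OGraph V) (k : ℕ) : Prop :=
  ∃ H : OGraph (Fin k), G.PushHom H

/-- The pushable chromatic number: the least `k` such that `G` is pushably `k`-colorable. -/
noncomputable def pushChromatic (G : OGraph V) : ℕ :=
  sInf {k | G.PushablyColorable k}

/-- The number of arcs of `G`. -/
noncomputable def arcCount (G : OGraph V) : ℕ :=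
  Nat.card {p : V × V // G.adj p.1 p.2}

/-- The potential `ρ(G) = 15|V(G)| − 13|A(G)|`. -/
noncomputable def potential (G : OGraph V) : ℤ :=
  15 * (Nat.card V : ℤ) - 13 * (G.arcCount : ℤ)

/-- The degree of a vertex in the underlying graph. -/
noncomputable def degree (G : OGraph V) (v : V) : ℕ :=
  Nat.card {u : V // G.adj v u ∨ G.adj u v}

/-- The underlying simple graph of an oriented graph. -/
def toSimple (G : OGraph V) : SimpleGraph V where
  Adj u v := G.adj u v ∨ G.adj v u
  symm := by
    constructor; rintro u v (h | h)
    · exact Or.inr h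
    · exact Or.inl h
  loopless := by
    constructor; rintro v (h | h) <;> exact G.irrefl' v h

/-- A subgraph of an oriented graph `G`: a set of vertices together with a
subrelation of the arc relation supported on that set. -/
structure Subgraph (G : OGraph V) where
  verts : Set V
  adj : V → V → Prop
  adj_sub : ∀ u v, adj u v → G.adj u v
  mem_left : ∀ u v, adj u v → u ∈ verts
  mem_right : ∀ u v, adj u v → v ∈ verts

/-- A subgraph, viewed as an oriented graph on its vertex set. -/
def Subgraph.toOGraph {G : OGraph V} (K : G.Subgraph) : OGraph K.verts where
  adj u v := K.adj u.1 v.1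
  irrefl' := fun v h => G.irrefl' v.1 (K.adj_sub _ _ h)
  asymm' := fun u v h1 h2 => G.asymm' u.1 v.1 (K.adj_sub _ _ h1) (K.adj_sub _ _ h2)

/-- A subgraph is proper if it misses a vertex or an arc of `G`. -/
def Subgraph.Proper {G : OGraph V} (K : G.Subgraph) : Prop :=
  K.verts ≠ Set.univ ∨ ∃ u v, G.adj u v ∧ ¬ K.adj u v

/-- The number of arcs of a subgraph. -/
noncomputable def Subgraph.arcCount {G : OGraph V} (K : G.Subgraph) : ℕ :=
  Nat.card {p : V × V // K.adj p.1 p.2}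

/-- The potential `ρ` of a subgraph. -/
noncomputable def Subgraph.potential {G : OGraph V} (K : G.Subgraph) : ℤ :=
  15 * (Nat.card K.verts : ℤ) - 13 * (K.arcCount : ℤ)

/-- The average-degree quantity `2|E(K)|/|V(K)|` of a subgraph. -/
noncomputable def Subgraph.density {G : OGraph V} (K : G.Subgraph) : ℚ :=
  (2 * (K.arcCount : ℚ)) / (Nat.card K.verts : ℚ)

/-- The maximum average degree of `G` is strictly less than `r`. -/
def MadLT (G : OGraph V) (r : ℚ) : Prop :=
  ∀ K : G.Subgraph, K.verts.Nonempty → K.density < r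

/-- The maximum average degree of `G` equals `r`. -/
def MadEq (G : OGraph V) (r : ℚ) : Prop :=
  (∀ K : G.Subgraph, K.verts.Nonempty → K.density ≤ r) ∧
  (∃ K : G.Subgraph, K.verts.Nonempty ∧ K.density = r)

/-- `G` is pushably 3-critical: it is not pushably 3-colorable but every proper
subgraph of it is. -/
def Pushably3Critical (G : OGraph V) : Prop :=
  ¬ G.PushablyColorable 3 ∧
  ∀ K : G.Subgraph, K.Proper → K.toOGraph.PushablyColorable 3

/-- A `k`-chain: a path with `k` arcs in the underlying graph whose endpoints are
`3⁺`-vertices and whose internal vertices are `2`-vertices. -/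
noncomputable def IsChain (G : OGraph V) (k : ℕ) (w : Fin (k+1) → V) : Prop :=
  Function.Injective w ∧
  (∀ i : Fin k, G.toSimple.Adj (w i.castSucc) (w i.succ)) ∧
  3 ≤ G.degree (w 0) ∧ 3 ≤ G.degree (w (Fin.last k)) ∧
  (∀ i : Fin (k+1), i.val ≠ 0 → i.val ≠ k → G.degree (w i) = 2)

/-- `x` and `y` are `k`-chain-adjacent. -/
noncomputable def ChainAdj (G : OGraph V) (k : ℕ) (x y : V) : Prop :=
  ∃ w : Fin (k+1) → V, IsChain G k w ∧ w 0 = x ∧ w (Fin.last k) = y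

/-- A chain incident to `v` having exactly `t` internal `2`-vertices
(that is, a `(t+1)`-chain starting at `v`). -/
noncomputable def IsChainFrom (G : OGraph V) (t : ℕ) (v : V) (w : Fin (t+2) → V) : Prop :=
  IsChain G (t+1) w ∧ w 0 = v

/-- `v` is a `3_{t1,t2,t3}`-vertex: a 3-vertex whose three incident chains contain
`t1`, `t2` and `t3` internal 2-vertices respectively. -/
noncomputable def Is3Type (G : OGraph V) (v : V) (t1 t2 t3 : ℕ) : Prop :=
  G.degree v = 3 ∧
  ∃ (w1 : Fin (t1+2) → V) (w2 : Fin (t2+2) → V) (w3 : Fin (t3+2) → V),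
    IsChainFrom G t1 v w1 ∧ IsChainFrom G t2 v w2 ∧ IsChainFrom G t3 v w3 ∧
    w1 1 ≠ w2 1 ∧ w1 1 ≠ w3 1 ∧ w2 1 ≠ w3 1

/-- `v` is a `3^t`-vertex: a 3-vertex whose incident chains contain exactly `t`
internal 2-vertices in total. -/
noncomputable def Is3Tot (G : OGraph V) (v : V) (t : ℕ) : Prop :=
  ∃ t1 t2 t3 : ℕ, t1 + t2 + t3 = t ∧ Is3Type G v t1 t2 t3

/-- `v` is a `3^{≥t}`-vertex: a 3-vertex whose incident chains contain at least `t`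
internal 2-vertices in total. -/
noncomputable def Is3TotGe (G : OGraph V) (v : V) (t : ℕ) : Prop :=
  ∃ t1 t2 t3 : ℕ, t ≤ t1 + t2 + t3 ∧ Is3Type G v t1 t2 t3

/-- A 2-dipath `ℓ`-`L(p,q)`-labeling of `G`. -/
def Is2DipathLabeling (G : OGraph V) (p q ℓ : ℕ) (g : V → ℕ) : Prop :=
  (∀ v, g v ≤ ℓ) ∧
  (∀ u v, G.toSimple.Adj u v → (p : ℤ) ≤ |(g u : ℤ) - (g v : ℤ)|) ∧
  (∀ u w v, G.adj u w → G.adj w v → (q : ℤ) ≤ |(g u : ℤ) - (g v : ℤ)|)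

/-- An oriented coloring of `G`. -/
def IsOrientedColoring (G : OGraph V) (g : V → ℕ) : Prop :=
  (∀ u v, G.adj u v → g u ≠ g v) ∧
  (∀ u v w x, G.adj u v → G.adj w x → g u = g x → g v ≠ g w)

/-- An oriented `ℓ`-`L(p,q)`-labeling: a 2-dipath `ℓ`-`L(p,q)`-labeling that is
also an oriented coloring. -/
def IsOrientedLabeling (G : OGraph V) (p q ℓ : ℕ) (g : V → ℕ) : Prop :=
  Is2DipathLabeling G p q ℓ g ∧ IsOrientedColoring G g

/-- The 2-dipath `L(p,q)` span of `G`. -/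
noncomputable def twoDipathSpan (G : OGraph V) (p q : ℕ) : ℕ :=
  sInf {ℓ | ∃ g : V → ℕ, Is2DipathLabeling G p q ℓ g}

/-- The oriented `L(p,q)` span of `G`. -/
noncomputable def orientedSpan (G : OGraph V) (p q : ℕ) : ℕ :=
  sInf {ℓ | ∃ g : V → ℕ, IsOrientedLabeling G p q ℓ g}

/-- `M` is of the form `P_k(K)`: `M` is obtained from the subgraph `K` by adding a
new oriented path with `k` arcs whose endpoints are identified with (not
necessarily distinct) vertices of `K`. -/
def IsPkOf (M : OGraph V) (K : M.Subgraph) (k : ℕ) : Prop :=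
  ∃ (w : Fin (k+1) → V) (ε : Fin k → Bool),
    w 0 ∈ K.verts ∧ w (Fin.last k) ∈ K.verts ∧
    (∀ i : Fin (k+1), i.val ≠ 0 → i.val ≠ k → w i ∉ K.verts) ∧
    (∀ i j : Fin (k+1), i.val ≠ 0 → i.val ≠ k → j.val ≠ 0 → j.val ≠ k →
        w i = w j → i = j) ∧
    (∀ v : V, v ∈ K.verts ∨ ∃ i : Fin (k+1), i.val ≠ 0 ∧ i.val ≠ k ∧ w i = v) ∧
    (∀ u v : V, M.adj u v ↔ (K.adj u v ∨ ∃ i : Fin k,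
      (ε i = true ∧ u = w i.castSucc ∧ v = w i.succ) ∨
      (ε i = false ∧ u = w i.succ ∧ v = w i.castSucc)))

end OGraph

/-- Build an oriented graph on `Fin n` from an explicit list of arcs. -/
def OGraph.ofList (n : ℕ) (l : List (Fin n × Fin n))
    (h1 : ∀ v : Fin n, (v, v) ∉ l)
    (h2 : ∀ u v : Fin n, (u, v) ∈ l → (v, u) ∉ l) : OGraph (Fin n) where
  adj u v := (u, v) ∈ l
  irrefl' := h1
  asymm' := h2

/-- The directed 3-cycle on `ZMod 3`, with arcs `i → i+1`. -/
def C3vec : OGraph (ZMod 3) where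
  adj i j := j = i + 1
  irrefl' := by decide
  asymm' := by decide

/-- The anti-twinned oriented graph `AT(H)`, on vertex set `W × Bool`
(`(v,false)` is `v` and `(v,true)` is `v'`). -/
def ATgraph {W : Type} (H : OGraph W) : OGraph (W × Bool) where
  adj p q := (p.2 = q.2 ∧ H.adj p.1 q.1) ∨ (p.2 ≠ q.2 ∧ H.adj q.1 p.1)
  irrefl' := by
    rintro ⟨v, b⟩ (⟨_, h⟩ | ⟨h, _⟩)
    · exact H.irrefl' v h
    · exact h rfl
  asymm' := by
    rintro ⟨u, a⟩ ⟨v, b⟩ (⟨e1, h1⟩ | ⟨e1, h1⟩) (⟨e2, h2⟩ | ⟨e2, h2⟩)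
    · exact H.asymm' _ _ h1 h2
    · exact e2 e1.symm
    · exact e1 e2.symm
    · exact H.asymm' _ _ h2 h1

/-- `AT(C⃗₃)`. -/
def ATC3 : OGraph (ZMod 3 × Bool) := ATgraph C3vec

/-- `C⃗₋₄`: the orientation of the 4-cycle with arcs v1→v2, v2→v3, v1→v4, v3→v4
(vertices v1,v2,v3,v4 are 0,1,2,3). -/
def Cminus4 : OGraph (Fin 4) :=
  OGraph.ofList 4 [(0,1),(1,2),(0,3),(2,3)] (by decide) (by decide)

/-- `E⃗₁`: vertices v1,v2,v3,v4 = 0,1,2,3, a1,a2,a3 = 4,5,6, b1,b2,b3 = 7,8,9,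
c1,c2,c3 = 10,11,12. -/
def E1 : OGraph (Fin 13) :=
  OGraph.ofList 13
    [(2,3),(3,0),(3,1),(0,4),(4,5),(5,6),(6,2),(1,7),(7,8),(8,9),(9,2),
     (0,10),(10,11),(11,12),(1,12)] (by decide) (by decide)

/-- `E⃗₂`: vertices v1,v2,v3,v4 = 0,1,2,3, x1,x2,x3 = 4,5,6, a1,a2 = 7,8,
b1,b2 = 9,10, c1,c2 = 11,12. -/
def E2 : OGraph (Fin 13) :=
  OGraph.ofList 13
    [(0,4),(4,2),(2,5),(5,1),(1,6),(6,0),(0,7),(7,8),(8,3),(1,9),(9,10),(10,3),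
     (2,11),(11,12),(12,3)] (by decide) (by decide)

/-- `E⃗₃`: vertices v1,v2,v3,v4 = 0,1,2,3, x1,x2 = 4,5, w1,w2,w3 = 6,7,8,
a1,a2 = 9,10, b1,b2 = 11,12. -/
def E3 : OGraph (Fin 13) :=
  OGraph.ofList 13
    [(2,4),(4,0),(2,5),(5,1),(6,0),(6,7),(7,8),(8,1),(0,9),(9,10),(10,3),
     (1,11),(11,12),(12,3),(3,2)] (by decide) (by decide)

/-- The oriented graph `F⃗` on 12 vertices and 14 arcs: vertices
v1,v2,v3,v4,u,p1,p2,p3,a1,a2,b1,b2 = 0,…,11. -/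
def Fgraph : OGraph (Fin 12) :=
  OGraph.ofList 12
    [(2,0),(2,1),(3,4),(4,2),(0,5),(6,5),(6,7),(7,1),(0,8),(8,9),(9,3),
     (1,10),(10,11),(11,3)] (by decide) (by decide)

/-- The oriented path on vertices `0,…,n` of `Fin (n+1)`, where the `i`-th edge
joins `i` and `i+1` and is oriented forwards iff `ε i = true`. -/
def pathO (n : ℕ) (ε : Fin n → Bool) : OGraph (Fin (n+1)) where
  adj u v := ∃ i : Fin n,
    (ε i = true ∧ u = i.castSucc ∧ v = i.succ) ∨
    (ε i = false ∧ u = i.succ ∧ v = i.castSucc)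
  irrefl' := by
    rintro v ⟨i, (⟨_, h1, h2⟩ | ⟨_, h1, h2⟩)⟩ <;>
    · have h := congrArg Fin.val (h1.symm.trans h2)
      simp only [Fin.val_succ, Fin.coe_castSucc] at h
      omega
  asymm' := by
    rintro u v ⟨i, hi⟩ ⟨j, hj⟩
    rcases hi with ⟨ei, h1, h2⟩ | ⟨ei, h1, h2⟩ <;>
      rcases hj with ⟨ej, h3, h4⟩ | ⟨ej, h3, h4⟩
    · have e1 := congrArg Fin.val (h1.symm.trans h4)
      have e2 := congrArg Fin.val (h2.symm.trans h3)
      simp only [Fin.val_succ, Fin.coe_castSucc] at e1 e2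
      omega
    · have e1 := congrArg Fin.val (h1.symm.trans h4)
      have e2 := congrArg Fin.val (h2.symm.trans h3)
      simp only [Fin.val_succ, Fin.coe_castSucc] at e1 e2
      have hij : i = j := Fin.ext (by omega)
      subst hij
      rw [ei] at ej
      exact Bool.noConfusion ej
    · have e1 := congrArg Fin.val (h1.symm.trans h4)
      have e2 := congrArg Fin.val (h2.symm.trans h3)
      simp only [Fin.val_succ, Fin.coe_castSucc] at e1 e2
      have hij : i = j := Fin.ext (by omega)
      subst hij
      rw [ei] at ej
      exact Bool.noConfusion ej
    · have e1 := congrArg Fin.val (h1.symm.trans h4)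
      have e2 := congrArg Fin.val (h2.symm.trans h3)
      simp only [Fin.val_succ, Fin.coe_castSucc] at e1 e2
      omega

/-- Given the oriented path `pathO n ε` from `x = 0` to `y = Fin.last n`,
the color `c` is allowed at `y` when `x` gets color `i`: some push of a set of
internal vertices admits a homomorphism to `C⃗₃` sending `x` to `i` and `y` to `c`. -/
def allowedColor (n : ℕ) (ε : Fin n → Bool) (i c : ZMod 3) : Prop :=
  ∃ S : Set (Fin (n+1)),
    (∀ v ∈ S, v ≠ 0 ∧ v ≠ Fin.last n) ∧
    ∃ f : Fin (n+1) → ZMod 3,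
      OGraph.Hom ((pathO n ε).push S) C3vec f ∧ f 0 = i ∧ f (Fin.last n) = c

open Classical in
/-- The number of pairs in the list `l` that are arcs of `G` (used to count forward
or backward arcs along a traversal of a cycle). -/
noncomputable def fwdCount {V : Type} (G : OGraph V) (l : List (V × V)) : ℕ :=
  (l.map fun p => if G.adj p.1 p.2 then 1 else 0).sum

/-- `M` is a minimal counterexample: a pushably 3-critical oriented graph, not
push-equivalent to any of `C⃗₋₄, E⃗₁, E⃗₂, E⃗₃`, with potential at least `−1`, and
minimal with respect to `|V| + |A|` among all such graphs. -/
def MinimalCE {V : Type} (M : OGraph V) : Prop :=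
  OGraph.Pushably3Critical M ∧
  ¬ M.PushEquiv Cminus4 ∧ ¬ M.PushEquiv E1 ∧ ¬ M.PushEquiv E2 ∧ ¬ M.PushEquiv E3 ∧
  (-1 : ℤ) ≤ M.potential ∧
  ∀ (W : Type), Finite W → ∀ G : OGraph W,
    OGraph.Pushably3Critical G → (-1 : ℤ) ≤ G.potential →
    Nat.card W + G.arcCount < Nat.card V + M.arcCount →
    (G.PushEquiv Cminus4 ∨ G.PushEquiv E1 ∨ G.PushEquiv E2 ∨ G.PushEquiv E3)

/-- Two orientations of the same underlying path with the same
parity of the number of forward arcs differ by pushing a set of internal vertices. -/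
theorem orientation_push_of_same_parity (n : ℕ) (ε ε' : Fin n → Bool)
    (hpar : (Finset.univ.filter fun i => ε i = true).card % 2
          = (Finset.univ.filter fun i => ε' i = true).card % 2) :
    ∃ S : Set (Fin (n+1)),
      (∀ v ∈ S, v ≠ 0 ∧ v ≠ Fin.last n) ∧
      ∀ u v, ((pathO n ε).push S).adj u v ↔ (pathO n ε').adj u v := by
  classical
  set c : Fin (n+1) → ℕ :=
    fun v => (Finset.univ.filter fun i : Fin n => (i : ℕ) < (v : ℕ) ∧ ε i ≠ ε' i).card with hc
  have hc0 : c 0 = 0 := by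
    simp only [hc]
    rw [Finset.card_eq_zero, Finset.filter_eq_empty_iff]
    intro j _
    simp
  -- total count of disagreements is even
  have htotal : c (Fin.last n) % 2 = 0 := by
    have hD : (Finset.univ.filter fun i : Fin n => (i : ℕ) < ((Fin.last n : Fin (n+1)) : ℕ) ∧ ε i ≠ ε' i)
        = ((Finset.univ.filter fun i : Fin n => ε i = true) \
            (Finset.univ.filter fun i : Fin n => ε' i = true)) ∪
          ((Finset.univ.filter fun i : Fin n => ε' i = true) \
            (Finset.univ.filter fun i : Fin n => ε i = true)) := by
      ext j
      simp only [Finset.mem_filter, Finset.mem_univ, true_and, Finset.mem_union,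
        Finset.mem_sdiff, Fin.val_last]
      constructor
      · rintro ⟨-, hne⟩
        cases hj : ε j <;> cases hj' : ε' j <;> simp_all
      · rintro (⟨h1, h2⟩ | ⟨h1, h2⟩) <;>
          exact ⟨j.isLt, by simp_all⟩
    have hdisj : Disjoint
        ((Finset.univ.filter fun i : Fin n => ε i = true) \
            (Finset.univ.filter fun i : Fin n => ε' i = true))
        ((Finset.univ.filter fun i : Fin n => ε' i = true) \
            (Finset.univ.filter fun i : Fin n => ε i = true)) :=
      disjoint_sdiff_sdiff
    have hcard := Finset.card_union_of_disjoint hdisj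
    have h1 := Finset.card_sdiff_add_card_inter
      (Finset.univ.filter fun i : Fin n => ε i = true)
      (Finset.univ.filter fun i : Fin n => ε' i = true)
    have h2 := Finset.card_sdiff_add_card_inter
      (Finset.univ.filter fun i : Fin n => ε' i = true)
      (Finset.univ.filter fun i : Fin n => ε i = true)
    rw [Finset.inter_comm] at h2
    simp only [hc, hD, hcard]
    omega
  have hstep : ∀ i : Fin n, c i.succ = c i.castSucc + (if ε i ≠ ε' i then 1 else 0) := by
    intro i
    simp only [hc, Fin.val_succ, Fin.coe_castSucc]
    have hsplit : (Finset.univ.filter fun j : Fin n => (j : ℕ) < (i : ℕ) + 1 ∧ ε j ≠ ε' j)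
        = (Finset.univ.filter fun j : Fin n => ((j : ℕ) < (i : ℕ) ∧ ε j ≠ ε' j)) ∪
          (Finset.univ.filter fun j : Fin n => (j = i ∧ ε j ≠ ε' j)) := by
      rw [← Finset.filter_or]
      apply Finset.filter_congr
      intro j _
      constructor
      · rintro ⟨hlt, hne⟩
        rcases Nat.lt_succ_iff_lt_or_eq.mp hlt with h | h
        · exact Or.inl ⟨h, hne⟩
        · exact Or.inr ⟨Fin.ext h, hne⟩
      · rintro (⟨h, hne⟩ | ⟨rfl, hne⟩)
        · exact ⟨Nat.lt_succ_of_lt h, hne⟩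
        · exact ⟨Nat.lt_succ_self _, hne⟩
    rw [hsplit, Finset.card_union_of_disjoint]
    · congr 1
      by_cases hP : ε i ≠ ε' i
      · rw [if_pos hP]
        rw [Finset.card_eq_one]
        exact ⟨i, by ext j; simp [hP]; rintro rfl; exact hP⟩
      · rw [if_neg hP]
        rw [Finset.card_eq_zero, Finset.filter_eq_empty_iff]
        rintro j - ⟨rfl, hne⟩
        exact hP hne
    · rw [Finset.disjoint_filter]
      rintro j - ⟨hlt, -⟩ ⟨rfl, -⟩
      exact absurd hlt (lt_irrefl _)
  have key : ∀ i : Fin n, ((c i.castSucc % 2 = 1) ↔ (c i.succ % 2 = 1)) ↔ (ε i = ε' i) := by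
    intro i
    have h := hstep i
    by_cases hP : ε i = ε' i
    · rw [if_neg (by simp [hP])] at h
      simp only [hP, iff_true]
      omega
    · rw [if_pos hP] at h
      simp only [hP, iff_false]
      omega
  refine ⟨{v | c v % 2 = 1}, ?_, ?_⟩
  · intro v hv
    simp only [Set.mem_setOf_eq] at hv
    constructor
    · rintro rfl; rw [hc0] at hv; omega
    · rintro rfl; omega
  · intro u v
    constructor
    · rintro (⟨hsame, ⟨i, hi⟩⟩ | ⟨hdiff, ⟨i, hi⟩⟩)
      · rcases hi with ⟨he, rfl, rfl⟩ | ⟨he, rfl, rfl⟩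
        · have he' : ε' i = true := by
            have := (key i).mp hsame; rw [← this, he]
          exact ⟨i, Or.inl ⟨he', rfl, rfl⟩⟩
        · have he' : ε' i = false := by
            have := (key i).mp hsame.symm; rw [← this, he]
          exact ⟨i, Or.inr ⟨he', rfl, rfl⟩⟩
      · rcases hi with ⟨he, rfl, rfl⟩ | ⟨he, rfl, rfl⟩
        · -- here v = i.castSucc, u = i.succ, ε i = true
          have hne : ε i ≠ ε' i := fun hEq => hdiff ((key i).mpr hEq).symm
          refine ⟨i, Or.inr ⟨?_, rfl, rfl⟩⟩
          rw [he] at hne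
          exact Bool.eq_false_iff.mpr (Ne.symm hne)
        · -- here v = i.succ, u = i.castSucc, ε i = false
          have hne : ε i ≠ ε' i := fun hEq => hdiff ((key i).mpr hEq)
          refine ⟨i, Or.inl ⟨?_, rfl, rfl⟩⟩
          rw [he] at hne
          exact Bool.ne_false_iff.mp (Ne.symm hne)
    · rintro ⟨i, ⟨he', rfl, rfl⟩ | ⟨he', rfl, rfl⟩⟩
      · by_cases hP : ε i = ε' i
        · exact Or.inl ⟨(key i).mpr hP, ⟨i, Or.inl ⟨hP.trans he', rfl, rfl⟩⟩⟩
        · refine Or.inr ⟨fun hsame => hP ((key i).mp hsame), ⟨i, Or.inr ⟨?_, rfl, rfl⟩⟩⟩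
          rw [he'] at hP
          exact Bool.eq_false_iff.mpr hP
      · by_cases hP : ε i = ε' i
        · exact Or.inl ⟨((key i).mpr hP).symm, ⟨i, Or.inr ⟨hP.trans he', rfl, rfl⟩⟩⟩
        · refine Or.inr ⟨fun hsame => hP ((key i).mp hsame.symm), ⟨i, Or.inl ⟨?_, rfl, rfl⟩⟩⟩
          rw [he'] at hP
          exact Bool.ne_false_iff.mp hP
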